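/- arXiv:1606.00610 — 6 statements merged into one kernel-verified Lean document; each statement's English description precedes it below -/
import Mathlib

section
/- Let X₁,…,X_d ∈ ℝⁿ span ℝⁿ, let λ₁,…,λ_d ∈ ℝ, let Δ = {μ ∈ (ℝⁿ)* : ⟨μ, X_j⟩ ≥ λ_j for j = 1,…,d}, and let π : ℝ^d → ℝⁿ be the linear map with π(e_j) = X_j. Then the zero level set of the reduced moment map equals the J-preimage of π*(Δ); explicitly, {z ∈ ℂ^d : for every v = (v₁,…,v_d) ∈ ker π, Σ_{j=1}^d v_j(|z_j|² + λ_j) = 0} = {z ∈ ℂ^d : there exists μ ∈ Δ with |z_j|² + λ_j = ⟨μ, X_j⟩ for all j = 1,…,d}. -/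
/-!
A point `z` lies in the level set iff the weight vector `wⱼ = |zⱼ|² + λⱼ` annihilates every linear
relation among the `Xⱼ`, i.e. iff the functional `v ↦ ∑ vⱼ wⱼ` on `ℝ^d` vanishes on `ker π`.
Over a field such a functional factors through `π` (`range π* = (ker π)^⊥`), which yields `μ` with
`μ (Xⱼ) = wⱼ`; as `|zⱼ|² ≥ 0`, this `μ` automatically lies in `Δ`.
-/

open Module

theorem exists_dual_apply_eq_iff {K M ι : Type*} [Field K] [AddCommGroup M] [Module K M]
    [Fintype ι] (X : ι → M) (w : ι → K) :
    (∃ μ : Dual K M, ∀ j, μ (X j) = w j) ↔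
      ∀ v : ι → K, ∑ j, v j • X j = 0 → ∑ j, v j * w j = 0 := by
  constructor
  · rintro ⟨μ, hμ⟩ v hv
    simpa [hμ] using congr_arg μ hv
  · intro h
    classical
    have hw : Fintype.linearCombination K w ∈
        (LinearMap.ker (Fintype.linearCombination K X)).dualAnnihilator := by
      rw [Submodule.mem_dualAnnihilator]
      intro v hv
      rw [LinearMap.mem_ker, Fintype.linearCombination_apply] at hv
      simpa [Fintype.linearCombination_apply, mul_comm] using h v hv
    rw [← LinearMap.range_dualMap_eq_dualAnnihilator_ker] at hw
    obtain ⟨μ, hμ⟩ := hw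
    refine ⟨μ, fun j => ?_⟩
    simpa [Fintype.linearCombination_apply_single] using LinearMap.congr_fun hμ (Pi.single j 1)

theorem level_set_eq_preimage_general {n d : ℕ}
    (X : Fin d → (Fin n → ℝ)) (lam : Fin d → ℝ)
    (Δ : Set (Module.Dual ℝ (Fin n → ℝ)))
    (hΔ : Δ = {μ : Module.Dual ℝ (Fin n → ℝ) | ∀ j : Fin d, lam j ≤ μ (X j)}) :
    {z : Fin d → ℂ | ∀ v : Fin d → ℝ, (∑ j : Fin d, v j • X j) = 0 →
        (∑ j : Fin d, v j * (‖z j‖ ^ 2 + lam j)) = 0}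
      = {z : Fin d → ℂ | ∃ μ ∈ Δ, ∀ j : Fin d, ‖z j‖ ^ 2 + lam j = μ (X j)} := by
  ext z
  rw [Set.mem_ofPred, Set.mem_ofPred, ← exists_dual_apply_eq_iff]
  subst hΔ
  constructor
  · rintro ⟨μ, hμ⟩
    refine ⟨μ, fun j => ?_, fun j => (hμ j).symm⟩
    rw [hμ j]
    linarith [sq_nonneg ‖z j‖]
  · rintro ⟨μ, -, hμ⟩
    exact ⟨μ, fun j => (hμ j).symm⟩

/-- The zero level set `Ψ⁻¹(0)` of the moment map for the kernel subgroup in the generalized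
Delzant construction equals `J⁻¹(π*(Δ))`: a point `z ∈ ℂ^d` satisfies
`∑ⱼ vⱼ(|zⱼ|² + λⱼ) = 0` for every `v ∈ ker π` iff there is `μ ∈ Δ` with
`|zⱼ|² + λⱼ = ⟨μ, Xⱼ⟩` for all `j`. -/
theorem level_set_eq_preimage {n d : ℕ}
    (X : Fin d → (Fin n → ℝ)) (lam : Fin d → ℝ)
    (hspan : Submodule.span ℝ (Set.range X) = ⊤)
    (Δ : Set (Module.Dual ℝ (Fin n → ℝ)))
    (hΔ : Δ = {μ : Module.Dual ℝ (Fin n → ℝ) | ∀ j : Fin d, lam j ≤ μ (X j)}) :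
    {z : Fin d → ℂ | ∀ v : Fin d → ℝ, (∑ j : Fin d, v j • X j) = 0 →
        (∑ j : Fin d, v j * (‖z j‖ ^ 2 + lam j)) = 0}
      = {z : Fin d → ℂ | ∃ μ ∈ Δ, ∀ j : Fin d, ‖z j‖ ^ 2 + lam j = μ (X j)} :=
  level_set_eq_preimage_general X lam Δ hΔ
end

section
/- Let X₁,…,X_d ∈ ℝⁿ span ℝⁿ, let λ₁,…,λ_d ∈ ℝ, let π : ℝ^d → ℝⁿ be the linear map with π(e_j) = X_j, and suppose the polyhedron Δ = {μ ∈ (ℝⁿ)* : ⟨μ, X_j⟩ ≥ λ_j for j = 1,…,d} is bounded. Then the set Z = {z ∈ ℂ^d : for every v ∈ ker π, Σ_{j=1}^d v_j(|z_j|² + λ_j) = 0} is compact. -/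
/-!
A point `z` of the level set makes `v ↦ ∑ⱼ vⱼ (|zⱼ|² + λⱼ)` vanish on `ker π`, so this functional
factors through `π` as some `μ ∈ (ℝⁿ)*` with `⟨μ, Xⱼ⟩ = |zⱼ|² + λⱼ ≥ λⱼ`; that is, `μ ∈ Δ`.
Boundedness of `Δ` then gives `|zⱼ|² ≤ R ‖Xⱼ‖ - λⱼ`, and the level set, being closed, is compact.
-/

open Bornology Set

theorem LinearMap.exists_comp_eq_of_ker_le {K V W U : Type*} [Field K]
    [AddCommGroup V] [Module K V] [AddCommGroup W] [Module K W] [AddCommGroup U] [Module K U]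
    (π : W →ₗ[K] V) (f : W →ₗ[K] U) (h : ker π ≤ ker f) : ∃ g : V →ₗ[K] U, g ∘ₗ π = f := by
  obtain ⟨l, hl⟩ := ((ker π).liftQ π le_rfl).exists_leftInverse_of_injective
    ((ker π).ker_liftQ_eq_bot π le_rfl le_rfl)
  refine ⟨(ker π).liftQ f h ∘ₗ l, LinearMap.ext fun x => ?_⟩
  have hx : l (π x) = (ker π).mkQ x := LinearMap.congr_fun hl ((ker π).mkQ x)
  simp [hx]

theorem Module.Dual.exists_apply_eq_of_sum_smul_eq_zero {K V ι : Type*} [Field K]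
    [AddCommGroup V] [Module K V] [Fintype ι] (X : ι → V) (w : ι → K)
    (hw : ∀ v : ι → K, ∑ j, v j • X j = 0 → ∑ j, v j * w j = 0) :
    ∃ μ : Module.Dual K V, ∀ j, μ (X j) = w j := by
  obtain ⟨μ, hμ⟩ := (Fintype.linearCombination K X).exists_comp_eq_of_ker_le
    (Fintype.linearCombination K w) fun v hv => by
      rw [LinearMap.mem_ker, Fintype.linearCombination_apply] at hv
      simpa [Fintype.linearCombination_apply, mul_comm] using hw v hv
  classical
  refine ⟨μ, fun j => ?_⟩
  simpa using LinearMap.congr_fun hμ (Pi.single j 1)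

section LevelSet

variable {ι V : Type*} [Fintype ι]

/-- The zero level set `Ψ⁻¹(0)` of the Delzant construction for the vectors `X` and constants
`lam`; the condition ranges over `v ∈ ker π`, where `π eⱼ = Xⱼ`. -/
def delzantLevelSet [AddCommGroup V] [Module ℝ V] (X : ι → V) (lam : ι → ℝ) : Set (ι → ℂ) :=
  {z | ∀ v : ι → ℝ, ∑ j, v j • X j = 0 → ∑ j, v j * (‖z j‖ ^ 2 + lam j) = 0}

theorem isClosed_delzantLevelSet [AddCommGroup V] [Module ℝ V] (X : ι → V) (lam : ι → ℝ) :
    IsClosed (delzantLevelSet X lam) := by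
  simp only [delzantLevelSet, ofPred_forall]
  exact isClosed_iInter fun v => isClosed_iInter fun _ => isClosed_eq (by fun_prop) continuous_const

theorem exists_dual_apply_eq_of_mem_delzantLevelSet [AddCommGroup V] [Module ℝ V]
    {X : ι → V} {lam : ι → ℝ} {z : ι → ℂ} (hz : z ∈ delzantLevelSet X lam) :
    ∃ μ : Module.Dual ℝ V, ∀ j, μ (X j) = ‖z j‖ ^ 2 + lam j :=
  Module.Dual.exists_apply_eq_of_sum_smul_eq_zero X _ hz

theorem norm_sq_le_of_mem_delzantLevelSet [SeminormedAddCommGroup V] [Module ℝ V]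
    {X : ι → V} {lam : ι → ℝ} {R : ℝ}
    (hR : ∀ μ : Module.Dual ℝ V, (∀ j, lam j ≤ μ (X j)) → ∀ x, |μ x| ≤ R * ‖x‖)
    {z : ι → ℂ} (hz : z ∈ delzantLevelSet X lam) (j : ι) :
    ‖z j‖ ^ 2 ≤ R * ‖X j‖ - lam j := by
  obtain ⟨μ, hμ⟩ := exists_dual_apply_eq_of_mem_delzantLevelSet hz
  have hμΔ : ∀ i, lam i ≤ μ (X i) := fun i => by
    rw [hμ]
    nlinarith [sq_nonneg ‖z i‖]
  have := (le_abs_self _).trans (hR μ hμΔ (X j))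
  rw [hμ] at this
  linarith

theorem isBounded_delzantLevelSet [SeminormedAddCommGroup V] [Module ℝ V]
    {X : ι → V} {lam : ι → ℝ} {R : ℝ}
    (hR : ∀ μ : Module.Dual ℝ V, (∀ j, lam j ≤ μ (X j)) → ∀ x, |μ x| ≤ R * ‖x‖) :
    IsBounded (delzantLevelSet X lam) := by
  refine (IsBounded.pi fun j => Metric.isBounded_closedBall
    (x := (0 : ℂ)) (r := √(R * ‖X j‖ - lam j))).subset fun z hz j _ => ?_
  rw [mem_closedBall_zero_iff, Real.le_sqrt (norm_nonneg _)
    ((sq_nonneg _).trans (norm_sq_le_of_mem_delzantLevelSet hR hz j))]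
  exact norm_sq_le_of_mem_delzantLevelSet hR hz j

end LevelSet

theorem level_set_compact_of_bounded_general {n d : ℕ}
    (X : Fin d → (Fin n → ℝ)) (lam : Fin d → ℝ)
    (Δ : Set (Module.Dual ℝ (Fin n → ℝ)))
    (hΔ : Δ = {μ : Module.Dual ℝ (Fin n → ℝ) | ∀ j : Fin d, lam j ≤ μ (X j)})
    (hbounded : ∃ R : ℝ, ∀ μ ∈ Δ, ∀ x : Fin n → ℝ, |μ x| ≤ R * ‖x‖) :
    IsCompact {z : Fin d → ℂ | ∀ v : Fin d → ℝ, (∑ j : Fin d, v j • X j) = 0 →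
        (∑ j : Fin d, v j * (‖z j‖ ^ 2 + lam j)) = 0} := by
  subst hΔ
  obtain ⟨R, hR⟩ := hbounded
  exact Metric.isCompact_of_isClosed_isBounded (isClosed_delzantLevelSet X lam)
    (isBounded_delzantLevelSet hR)

/-- If the polyhedron `Δ = {μ : ⟨μ,X_j⟩ ≥ λ_j}` is bounded, then the zero level set
`Z = Ψ⁻¹(0) = {z ∈ ℂ^d : ∑ⱼ vⱼ(|zⱼ|² + λⱼ) = 0 for all v ∈ ker π}` is compact. -/
theorem level_set_compact_of_bounded {n d : ℕ}
    (X : Fin d → (Fin n → ℝ)) (lam : Fin d → ℝ)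
    (hspan : Submodule.span ℝ (Set.range X) = ⊤)
    (Δ : Set (Module.Dual ℝ (Fin n → ℝ)))
    (hΔ : Δ = {μ : Module.Dual ℝ (Fin n → ℝ) | ∀ j : Fin d, lam j ≤ μ (X j)})
    (hbounded : ∃ R : ℝ, ∀ μ ∈ Δ, ∀ x : Fin n → ℝ, |μ x| ≤ R * ‖x‖) :
    IsCompact {z : Fin d → ℂ | ∀ v : Fin d → ℝ, (∑ j : Fin d, v j • X j) = 0 →
        (∑ j : Fin d, v j * (‖z j‖ ^ 2 + lam j)) = 0} :=
  level_set_compact_of_bounded_general X lam Δ hΔ hbounded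
end

section
/- Let X₁,…,X_d ∈ ℝⁿ span ℝⁿ, let λ₁,…,λ_d ∈ ℝ, let Δ = {μ ∈ (ℝⁿ)* : ⟨μ, X_j⟩ ≥ λ_j for j = 1,…,d}, and let π : ℝ^d → ℝⁿ be the linear map with π(e_j) = X_j. Then for every μ ∈ (ℝⁿ)*: μ ∈ Δ if and only if there exists z ∈ ℂ^d with |z_j|² + λ_j = ⟨μ, X_j⟩ for all j = 1,…,d and Σ_{j=1}^d v_j(|z_j|² + λ_j) = 0 for every v ∈ ker π. In other words, the image of the level set Ψ⁻¹(0) under the induced moment map Φ = (π*)⁻¹ ∘ J is exactly Δ. -/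
/-! The polyhedron condition `λⱼ ≤ ⟨μ, Xⱼ⟩` says exactly that each `⟨μ, Xⱼ⟩ - λⱼ` is some `|zⱼ|²`;
the level-set condition is then automatic, because `J(z) = π*μ` annihilates `ker π`. -/

theorem Complex.exists_norm_sq_add_eq_of_le {a b : ℝ} (h : a ≤ b) : ∃ z : ℂ, ‖z‖ ^ 2 + a = b :=
  ⟨Real.sqrt (b - a), by
    rw [Complex.norm_real, Real.norm_of_nonneg (Real.sqrt_nonneg _),
      Real.sq_sqrt (sub_nonneg.mpr h), sub_add_cancel]⟩

theorem Module.Dual.sum_mul_apply_eq_zero_of_sum_smul_eq_zero {R M ι : Type*} [CommSemiring R]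
    [AddCommMonoid M] [Module R M] [Fintype ι] (μ : Module.Dual R M) {X : ι → M} {v : ι → R}
    (hv : ∑ j, v j • X j = 0) : ∑ j, v j * μ (X j) = 0 := by
  simpa only [map_sum, map_smul, smul_eq_mul, map_zero] using congrArg μ hv

theorem moment_map_image_eq_polyhedron_general {n d : ℕ}
    (X : Fin d → (Fin n → ℝ)) (lam : Fin d → ℝ)
    (Δ : Set (Module.Dual ℝ (Fin n → ℝ)))
    (hΔ : Δ = {μ : Module.Dual ℝ (Fin n → ℝ) | ∀ j : Fin d, lam j ≤ μ (X j)}) :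
    ∀ μ : Module.Dual ℝ (Fin n → ℝ), μ ∈ Δ ↔
      ∃ z : Fin d → ℂ, (∀ j : Fin d, ‖z j‖ ^ 2 + lam j = μ (X j)) ∧
        ∀ v : Fin d → ℝ, (∑ j : Fin d, v j • X j) = 0 →
          (∑ j : Fin d, v j * (‖z j‖ ^ 2 + lam j)) = 0 := by
  intro μ
  subst hΔ
  constructor
  · intro hμ
    choose z hz using fun j => Complex.exists_norm_sq_add_eq_of_le (hμ j)
    refine ⟨z, hz, fun v hv => ?_⟩
    simp only [hz]
    exact μ.sum_mul_apply_eq_zero_of_sum_smul_eq_zero hv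
  · rintro ⟨z, hz, -⟩ j
    rw [← hz j]
    exact le_add_of_nonneg_left (sq_nonneg _)

/-- The image of the level set `Ψ⁻¹(0)` under the induced moment map `Φ = (π*)⁻¹ ∘ J` is
exactly `Δ`: a functional `μ` lies in `Δ` iff there is `z ∈ ℂ^d` with
`|zⱼ|² + λⱼ = ⟨μ, Xⱼ⟩` for all `j` and `∑ⱼ vⱼ(|zⱼ|² + λⱼ) = 0` for all `v ∈ ker π`. -/
theorem moment_map_image_eq_polyhedron {n d : ℕ}
    (X : Fin d → (Fin n → ℝ)) (lam : Fin d → ℝ)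
    (hspan : Submodule.span ℝ (Set.range X) = ⊤)
    (Δ : Set (Module.Dual ℝ (Fin n → ℝ)))
    (hΔ : Δ = {μ : Module.Dual ℝ (Fin n → ℝ) | ∀ j : Fin d, lam j ≤ μ (X j)}) :
    ∀ μ : Module.Dual ℝ (Fin n → ℝ), μ ∈ Δ ↔
      ∃ z : Fin d → ℂ, (∀ j : Fin d, ‖z j‖ ^ 2 + lam j = μ (X j)) ∧
        ∀ v : Fin d → ℝ, (∑ j : Fin d, v j • X j) = 0 →
          (∑ j : Fin d, v j * (‖z j‖ ^ 2 + lam j)) = 0 :=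
  moment_map_image_eq_polyhedron_general X lam Δ hΔ
end

section
/- Let φ = (1+√5)/2 and set X₁ = (−1/(2φ), −√(2+φ)/2), X₂ = (−φ/2, √(2+φ)/(2φ)), X₃ = (φ/2, √(2+φ)/(2φ)), X₄ = (1/(2φ), −√(2+φ)/2). Then {z ∈ ℂ⁴ : there exists μ ∈ ℝ² with |z₁|² − 1 = μ·X₁, |z₂|² = μ·X₂, |z₃|² = μ·X₃, |z₄|² − 1 = μ·X₄} = {z ∈ ℂ⁴ : φ|z₁|² + |z₂|² + φ|z₃|² = φ and −|z₁|² + |z₂|² + φ|z₄|² = φ − 1}, where · denotes the standard scalar product on ℝ². -/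
/-!
The map `μ ↦ (⟨μ, X₁⟩, …, ⟨μ, X₄⟩)` has as image exactly the vectors annihilated by the linear
relations among the `Xⱼ`. Since `X₂, X₃` form a basis of `ℝ²`, these relations are spanned by
`φ X₁ + X₂ + φ X₃ = 0` and `-X₁ + X₂ + φ X₄ = 0` (both consequences of `φ² = φ + 1`), and applied
to `(|z₁|² - 1, |z₂|², |z₃|², |z₄|² - 1)` they give the two quadratic equations.
-/

/-- Cramer's rule. -/
theorem exists_dot_eq_of_det_ne_zero {X Y : ℝ × ℝ} (hdet : X.1 * Y.2 - X.2 * Y.1 ≠ 0)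
    (b c : ℝ) : ∃ μ : ℝ × ℝ, b = μ.1 * X.1 + μ.2 * X.2 ∧ c = μ.1 * Y.1 + μ.2 * Y.2 := by
  refine ⟨((b * Y.2 - c * X.2) / (X.1 * Y.2 - X.2 * Y.1),
    (c * X.1 - b * Y.1) / (X.1 * Y.2 - X.2 * Y.1)), ?_, ?_⟩ <;>
  · rw [div_mul_eq_mul_div, div_mul_eq_mul_div, ← add_div, eq_div_iff hdet]
    ring

theorem dot_relation_eq_zero {X Y Z : ℝ × ℝ} {a b c : ℝ} (h : a • X + b • Y + c • Z = 0)
    (μ : ℝ × ℝ) :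
    a * (μ.1 * X.1 + μ.2 * X.2) + b * (μ.1 * Y.1 + μ.2 * Y.2) +
      c * (μ.1 * Z.1 + μ.2 * Z.2) = 0 := by
  have h₁ : a * X.1 + b * Y.1 + c * Z.1 = 0 := by simpa using congrArg Prod.fst h
  have h₂ : a * X.2 + b * Y.2 + c * Z.2 = 0 := by simpa using congrArg Prod.snd h
  linear_combination μ.1 * h₁ + μ.2 * h₂

theorem exists_dot_eq_iff_of_relations {X₁ X₂ X₃ X₄ : ℝ × ℝ} {a₁ a₂ a₃ b₁ b₂ b₄ : ℝ}
    (hdet : X₂.1 * X₃.2 - X₂.2 * X₃.1 ≠ 0)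
    (ha : a₁ • X₁ + a₂ • X₂ + a₃ • X₃ = 0) (ha₁ : a₁ ≠ 0)
    (hb : b₁ • X₁ + b₂ • X₂ + b₄ • X₄ = 0) (hb₄ : b₄ ≠ 0) (v₁ v₂ v₃ v₄ : ℝ) :
    (∃ μ : ℝ × ℝ,
        v₁ = μ.1 * X₁.1 + μ.2 * X₁.2 ∧ v₂ = μ.1 * X₂.1 + μ.2 * X₂.2 ∧
        v₃ = μ.1 * X₃.1 + μ.2 * X₃.2 ∧ v₄ = μ.1 * X₄.1 + μ.2 * X₄.2) ↔
      a₁ * v₁ + a₂ * v₂ + a₃ * v₃ = 0 ∧ b₁ * v₁ + b₂ * v₂ + b₄ * v₄ = 0 := by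
  constructor
  · rintro ⟨μ, rfl, rfl, rfl, rfl⟩
    exact ⟨dot_relation_eq_zero ha μ, dot_relation_eq_zero hb μ⟩
  · rintro ⟨hv₁, hv₄⟩
    obtain ⟨μ, rfl, rfl⟩ := exists_dot_eq_of_det_ne_zero hdet v₂ v₃
    have h₁ : v₁ = μ.1 * X₁.1 + μ.2 * X₁.2 :=
      mul_left_cancel₀ ha₁ (by linear_combination hv₁ - dot_relation_eq_zero ha μ)
    refine ⟨μ, h₁, rfl, rfl, mul_left_cancel₀ hb₄ ?_⟩
    linear_combination hv₄ - dot_relation_eq_zero hb μ - b₁ * h₁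

theorem penroseKite_det_ne_zero {φ s : ℝ} (hφ : φ ≠ 0) (hs : s ≠ 0) :
    -(φ / 2) * (s / (2 * φ)) - s / (2 * φ) * (φ / 2) ≠ 0 := by
  have h : -(φ / 2) * (s / (2 * φ)) - s / (2 * φ) * (φ / 2) = -(s / 2) := by
    field_simp
    ring
  rw [h]
  exact neg_ne_zero.mpr (div_ne_zero hs two_ne_zero)

section PenroseKite

variable {φ : ℝ} (hφ : φ ^ 2 = φ + 1) (s : ℝ)
include hφ

theorem penroseKite_relation_one :
    φ • (-(1 / (2 * φ)), -(s / 2)) + (1 : ℝ) • (-(φ / 2), s / (2 * φ)) +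
      φ • (φ / 2, s / (2 * φ)) = (0 : ℝ × ℝ) := by
  have hφ₀ : φ ≠ 0 := by rintro rfl; norm_num at hφ
  ext <;> simp only [Prod.smul_mk, Prod.mk_add_mk, smul_eq_mul, Prod.fst_zero, Prod.snd_zero] <;>
    field_simp
  · linear_combination hφ
  · linear_combination (-s) * hφ

theorem penroseKite_relation_two :
    (-1 : ℝ) • (-(1 / (2 * φ)), -(s / 2)) + (1 : ℝ) • (-(φ / 2), s / (2 * φ)) +
      φ • (1 / (2 * φ), -(s / 2)) = (0 : ℝ × ℝ) := by
  have hφ₀ : φ ≠ 0 := by rintro rfl; norm_num at hφ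
  ext <;> simp only [Prod.smul_mk, Prod.mk_add_mk, smul_eq_mul, Prod.fst_zero, Prod.snd_zero] <;>
    field_simp
  · linear_combination -hφ
  · linear_combination (-s) * hφ

end PenroseKite

/-- The zero level set of the generalized Delzant construction for the Penrose kite:
`J(z) ∈ range π*` is equivalent to the two quadratic equations
`φ|z₁|² + |z₂|² + φ|z₃|² = φ` and `−|z₁|² + |z₂|² + φ|z₄|² = φ − 1`. -/
theorem penrose_kite_level_set (φ : ℝ) (hφ : φ = (1 + Real.sqrt 5) / 2)
    (X1 X2 X3 X4 : ℝ × ℝ)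
    (hX1 : X1 = (-(1 / (2 * φ)), -(Real.sqrt (2 + φ) / 2)))
    (hX2 : X2 = (-(φ / 2), Real.sqrt (2 + φ) / (2 * φ)))
    (hX3 : X3 = (φ / 2, Real.sqrt (2 + φ) / (2 * φ)))
    (hX4 : X4 = (1 / (2 * φ), -(Real.sqrt (2 + φ) / 2))) :
    {z : Fin 4 → ℂ | ∃ μ : ℝ × ℝ,
        ‖z 0‖ ^ 2 - 1 = μ.1 * X1.1 + μ.2 * X1.2 ∧
        ‖z 1‖ ^ 2 = μ.1 * X2.1 + μ.2 * X2.2 ∧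
        ‖z 2‖ ^ 2 = μ.1 * X3.1 + μ.2 * X3.2 ∧
        ‖z 3‖ ^ 2 - 1 = μ.1 * X4.1 + μ.2 * X4.2} =
      {z : Fin 4 → ℂ |
        φ * ‖z 0‖ ^ 2 + ‖z 1‖ ^ 2 + φ * ‖z 2‖ ^ 2 = φ ∧
        -‖z 0‖ ^ 2 + ‖z 1‖ ^ 2 + φ * ‖z 3‖ ^ 2 = φ - 1} := by
  have hφ_sq : φ ^ 2 = φ + 1 := hφ ▸ Real.goldenRatio_sq
  have hφ_pos : 0 < φ := hφ ▸ Real.goldenRatio_pos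
  have hφ₀ : φ ≠ 0 := hφ_pos.ne'
  have hs : Real.sqrt (2 + φ) ≠ 0 := Real.sqrt_ne_zero'.mpr (by linarith)
  subst hX1 hX2 hX3 hX4
  ext z
  rw [Set.mem_ofPred_eq, Set.mem_ofPred_eq,
    exists_dot_eq_iff_of_relations (penroseKite_det_ne_zero hφ₀ hs)
      (penroseKite_relation_one hφ_sq _) hφ₀ (penroseKite_relation_two hφ_sq _) hφ₀]
  constructor <;> rintro ⟨h₁, h₂⟩ <;> constructor <;> linarith
end

section
/- Let φ = (1+√5)/2, let Y₀ = (1,0), Y₁ = (1/(2φ), √(2+φ)/2), Y₂ = (−φ/2, √(2+φ)/(2φ)), Y₃ = (−φ/2, −√(2+φ)/(2φ)), Y₄ = (1/(2φ), −√(2+φ)/2), and let Q ⊆ ℝ² be the set of integer linear combinations of Y₀, Y₁, Y₂, Y₃, Y₄. Set X₁ = −Y₁, X₂ = Y₂, X₃ = −Y₃, X₄ = Y₄. Then {x ∈ ℝ⁴ : x₁X₁ + x₂X₂ + x₃X₃ + x₄X₄ ∈ Q} = {(s − (φ−1)t + k₁, (φ−1)(s+t) + k₂, s + k₃, t + k₄)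 : s, t ∈ ℝ, (k₁,k₂,k₃,k₄) ∈ ℤ⁴}. -/
/-!
Because the five pentagon vectors sum to zero, `Q` is the `ℤ`-span of `X₁, …, X₄`. Hence
`∑ xⱼXⱼ ∈ Q` iff `x − k` lies in the kernel of `x ↦ ∑ xⱼXⱼ` for some `k ∈ ℤ⁴`. Using
`φ² = φ + 1`, i.e. `1/φ = φ − 1`, the two coordinate equations of that kernel cut out exactly
the plane `{(s − (φ−1)t, (φ−1)(s+t), s, t)}`.
-/

open Set

namespace AddSubgroup

variable {M : Type*} [AddCommGroup M]

theorem closure_five_eq_closure_range_of_add_eq_zero {a₀ a₁ a₂ a₃ a₄ : M}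
    (h : a₀ + a₁ + a₂ + a₃ + a₄ = 0) :
    closure {a₀, a₁, a₂, a₃, a₄} = closure (range ![-a₁, a₂, -a₃, a₄]) := by
  set S := closure (range ![-a₁, a₂, -a₃, a₄])
  have h₁ : a₁ ∈ S := neg_neg a₁ ▸ S.neg_mem (subset_closure ⟨0, rfl⟩)
  have h₂ : a₂ ∈ S := subset_closure ⟨1, rfl⟩
  have h₃ : a₃ ∈ S := neg_neg a₃ ▸ S.neg_mem (subset_closure ⟨2, rfl⟩)
  have h₄ : a₄ ∈ S := subset_closure ⟨3, rfl⟩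
  have h₀ : a₀ = -a₁ - a₂ - a₃ - a₄ := eq_of_sub_eq_zero (by rw [← h]; abel)
  refine le_antisymm ((closure_le S).2 ?_) ((closure_le _).2 ?_)
  · rintro _ (rfl | rfl | rfl | rfl | rfl)
    · rw [h₀]
      exact S.sub_mem (S.sub_mem (S.sub_mem (S.neg_mem h₁) h₂) h₃) h₄
    all_goals assumption
  · rintro _ ⟨i, rfl⟩
    fin_cases i <;> simp <;> exact subset_closure (by simp)

variable {ι R : Type*} [Fintype ι] [Ring R] [Module R M]

theorem sum_smul_mem_closure_range_iff (v : ι → M) (x : ι → R) :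
    ∑ i, x i • v i ∈ closure (range v) ↔ ∃ k : ι → ℤ, ∑ i, (x i - k i) • v i = 0 := by
  refine mem_closure_range_iff_of_fintype.trans (exists_congr fun k => ?_)
  rw [← sub_eq_zero]
  simp only [sub_smul, Finset.sum_sub_distrib, Int.cast_smul_eq_zsmul]

end AddSubgroup

theorem div_two_mul_of_sq_eq_add_one {K : Type*} [Field K] {φ : K} (hφ : φ ^ 2 = φ + 1)
    (a : K) : a / (2 * φ) = (φ - 1) * a / 2 := by
  have hinv : φ⁻¹ = φ - 1 := inv_eq_of_mul_eq_one_right (by linear_combination hφ)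
  rw [div_eq_mul_inv, mul_inv, hinv]
  ring

theorem pentagon_vertices_sum_eq_zero {φ : ℝ} (hφ : φ ^ 2 = φ + 1) (c : ℝ) :
    ((1, 0) : ℝ × ℝ) + (1 / (2 * φ), c / 2) + (-(φ / 2), c / (2 * φ)) +
      (-(φ / 2), -(c / (2 * φ))) + (1 / (2 * φ), -(c / 2)) = 0 := by
  simp only [div_two_mul_of_sq_eq_add_one hφ]
  ext
  · simp only [Prod.fst_add, Prod.fst_zero]
    ring
  · simp only [Prod.snd_add, Prod.snd_zero]
    ring

theorem kite_combination_eq_zero_iff {φ c : ℝ} (hφ : φ ^ 2 = φ + 1) (hc : c ≠ 0) (z : Fin 4 → ℝ) :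
    ∑ i, z i • ![-(1 / (2 * φ), c / 2), (-(φ / 2), c / (2 * φ)), -(-(φ / 2), -(c / (2 * φ))),
        (1 / (2 * φ), -(c / 2))] i = 0 ↔
      ∃ s t : ℝ, z = ![s - (φ - 1) * t, (φ - 1) * (s + t), s, t] := by
  simp only [Fin.sum_univ_four, Prod.ext_iff, div_two_mul_of_sq_eq_add_one hφ]
  simp only [Fin.isValue, Matrix.cons_val_zero, Matrix.cons_val_one, Matrix.cons_val,
    Prod.neg_mk, neg_neg, Prod.smul_mk, smul_eq_mul, mul_neg, Prod.mk_add_mk, Prod.fst_zero,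
    Prod.snd_zero]
  constructor
  · rintro ⟨h₁, h₂⟩
    have h₂' : -z 0 + (φ - 1) * (z 1 + z 2) - z 3 = 0 :=
      mul_left_cancel₀ hc (by linear_combination 2 * h₂)
    -- `2φ·h₁ − h₂'` eliminates `z 0` and `z 3`, leaving `2 (z 2 + z 3) − 2φ · z 1 = 0`.
    have hz₁ : z 1 = (φ - 1) * (z 2 + z 3) := by
      linear_combination (-(φ - 1) / 2) * (2 * φ * h₁ - h₂')
        + (-z 1 + (φ - 1) / 2 * (-z 0 - z 1 + z 2 + z 3)) * hφ
    have hz₀ : z 0 = z 2 - (φ - 1) * z 3 := by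
      linear_combination -h₂' + (φ - 1) * hz₁ + (z 2 + z 3) * hφ
    refine ⟨z 2, z 3, ?_⟩
    ext i
    fin_cases i
    exacts [hz₀, hz₁, rfl, rfl]
  · rintro ⟨s, t, rfl⟩
    simp only [Fin.isValue, Matrix.cons_val_zero, Matrix.cons_val_one, Matrix.cons_val]
    constructor
    · linear_combination (-s / 2) * hφ
    · linear_combination (c * (s + t) / 2) * hφ

/-- Computation of the group `N` in the Delzant construction for the Penrose kite, at the
level of lifts in `ℝ⁴`: with `X₁ = −Y₁`, `X₂ = Y₂`, `X₃ = −Y₃`, `X₄ = Y₄` and `Q` the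
pentagonal quasilattice, `{x ∈ ℝ⁴ : ∑ xⱼXⱼ ∈ Q}` equals
`{(s − (φ−1)t + k₁, (φ−1)(s+t) + k₂, s + k₃, t + k₄) : s, t ∈ ℝ, k ∈ ℤ⁴}`. -/
theorem penrose_kite_kernel_group (φ : ℝ) (hφ : φ = (1 + Real.sqrt 5) / 2)
    (Y0 Y1 Y2 Y3 Y4 : ℝ × ℝ)
    (hY0 : Y0 = (1, 0))
    (hY1 : Y1 = (1 / (2 * φ), Real.sqrt (2 + φ) / 2))
    (hY2 : Y2 = (-(φ / 2), Real.sqrt (2 + φ) / (2 * φ)))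
    (hY3 : Y3 = (-(φ / 2), -(Real.sqrt (2 + φ) / (2 * φ))))
    (hY4 : Y4 = (1 / (2 * φ), -(Real.sqrt (2 + φ) / 2)))
    (Q : AddSubgroup (ℝ × ℝ))
    (hQ : Q = AddSubgroup.closure {Y0, Y1, Y2, Y3, Y4}) :
    {x : Fin 4 → ℝ | x 0 • (-Y1) + x 1 • Y2 + x 2 • (-Y3) + x 3 • Y4 ∈ Q} =
      {x : Fin 4 → ℝ | ∃ (s t : ℝ) (k : Fin 4 → ℤ),
        x 0 = s - (φ - 1) * t + k 0 ∧
        x 1 = (φ - 1) * (s + t) + k 1 ∧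
        x 2 = s + k 2 ∧
        x 3 = t + k 3} := by
  have hφ2 : φ ^ 2 = φ + 1 := hφ ▸ Real.goldenRatio_sq
  have hφ0 : 0 < φ := hφ ▸ Real.goldenRatio_pos
  have hc : √(2 + φ) ≠ 0 := (Real.sqrt_pos.2 (by linarith)).ne'
  have hX (x : Fin 4 → ℝ) : x 0 • -Y1 + x 1 • Y2 + x 2 • -Y3 + x 3 • Y4 =
      ∑ i, x i • ![-Y1, Y2, -Y3, Y4] i := by
    simp [Fin.sum_univ_four]
  rw [hQ, AddSubgroup.closure_five_eq_closure_range_of_add_eq_zero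
    (by rw [hY0, hY1, hY2, hY3, hY4]; exact pentagon_vertices_sum_eq_zero hφ2 _)]
  ext x
  rw [mem_ofPred_eq, hX, AddSubgroup.sum_smul_mem_closure_range_iff]
  subst hY1 hY2 hY3 hY4
  simp only [kite_combination_eq_zero_iff hφ2 hc]
  simp only [funext_iff, Fin.forall_fin_succ, sub_eq_iff_eq_add, Matrix.cons_val_zero,
    Matrix.cons_val_succ, Fin.succ_zero_eq_one, Fin.succ_one_eq_two, Matrix.cons_val_fin_one,
    Fin.reduceSucc, IsEmpty.forall_iff, and_true]
  exact ⟨fun ⟨k, s, t, h⟩ => ⟨s, t, k, h⟩, fun ⟨s, t, k, h⟩ => ⟨k, s, t, h⟩⟩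
end

section
/- Let φ = (1+√5)/2, let Y₀ = (1,0), Y₁ = (1/(2φ), √(2+φ)/2), Y₂ = (−φ/2, √(2+φ)/(2φ)), Y₃ = (−φ/2, −√(2+φ)/(2φ)), Y₄ = (1/(2φ), −√(2+φ)/2), and let Q ⊆ ℝ² be the set of integer linear combinations of Y₀, Y₁, Y₂, Y₃, Y₄. Then {l ∈ ℝ : (l, 0) ∈ Q} = {a + bφ : a, b ∈ ℤ}. -/
/-!
Writing `s = √(2 + φ)` and using `1/φ = φ - 1`, every generator `Yᵢ`, hence every point of `Q`,
has the form `(w + φ²v/2, s v/2)` with `w, v ∈ ℤ + φℤ`. A point of `Q` on the first axis therefore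
has `v = 0`, and its abscissa `w` lies in `ℤ + φℤ`. Conversely `1 = Y₀` and `φ = -(Y₂ + Y₃)`.
-/

namespace PenroseKite

variable {R : Type*} [Ring R]

def shear (α β : R) : R × R →+ R × R where
  toFun p := (p.1 + α * p.2, β * p.2)
  map_zero' := by simp
  map_add' p q := by
    ext
    · simp only [Prod.fst_add, Prod.snd_add, mul_add]; abel
    · simp only [Prod.snd_add, mul_add]

@[simp]
theorem shear_apply (α β : R) (p : R × R) : shear α β p = (p.1 + α * p.2, β * p.2) := rfl

theorem mem_of_mk_zero_mem_map_shear [NoZeroDivisors R] {L : AddSubgroup R} {α β x : R}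
    (hβ : β ≠ 0) (hx : (x, 0) ∈ (L.prod L).map (shear α β)) : x ∈ L := by
  obtain ⟨⟨w, v⟩, ⟨hw, -⟩, hwv⟩ := hx
  obtain ⟨rfl, hv⟩ := Prod.mk.inj hwv
  obtain rfl : v = 0 := (mul_eq_zero.1 hv).resolve_left hβ
  simpa using hw

theorem coe_closure_one_pair (θ : R) :
    (AddSubgroup.closure {1, θ} : Set R) = {x | ∃ a b : ℤ, x = a + b * θ} := by
  ext x
  simp only [SetLike.mem_coe, AddSubgroup.mem_closure_pair, zsmul_eq_mul, mul_one, eq_comm,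
    Set.mem_ofPred_eq]

theorem int_add_int_mul_mem_closure (θ : R) (a b : ℤ) :
    (a + b * θ : R) ∈ AddSubgroup.closure {1, θ} := by
  rw [← SetLike.mem_coe, coe_closure_one_pair]
  exact ⟨a, b, rfl⟩

theorem closure_pentagon_le_map_shear {φ : ℝ} (hφ : φ ^ 2 = φ + 1) (s : ℝ) :
    AddSubgroup.closure {((1 : ℝ), (0 : ℝ)), (1 / (2 * φ), s / 2), (-(φ / 2), s / (2 * φ)),
      (-(φ / 2), -(s / (2 * φ))), (1 / (2 * φ), -(s / 2))} ≤
      ((AddSubgroup.closure {1, φ}).prod (AddSubgroup.closure {1, φ})).map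
        (shear (φ ^ 2 / 2) (s / 2)) := by
  have hφ0 : φ ≠ 0 := by rintro rfl; norm_num at hφ
  have hmem : ∀ (p : ℝ × ℝ) (a b c d : ℤ),
      p = shear (φ ^ 2 / 2) (s / 2) (a + b * φ, c + d * φ) →
      p ∈ ((AddSubgroup.closure {1, φ}).prod (AddSubgroup.closure {1, φ})).map
        (shear (φ ^ 2 / 2) (s / 2)) := by
    rintro p a b c d rfl
    exact AddSubgroup.mem_map_of_mem _ (AddSubgroup.mem_prod.2
      ⟨int_add_int_mul_mem_closure φ a b, int_add_int_mul_mem_closure φ c d⟩)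
  rw [AddSubgroup.closure_le]
  rintro y (rfl | rfl | rfl | rfl | rfl) <;>
    [refine hmem _ 1 0 0 0 ?_; refine hmem _ (-1) 0 1 0 ?_; refine hmem _ 0 (-1) (-1) 1 ?_;
      refine hmem _ 0 0 1 (-1) ?_; refine hmem _ 0 1 (-1) 0 ?_] <;>
    ext <;> simp only [shear_apply] <;> push_cast <;> field_simp <;> grind

end PenroseKite

/-- For the pentagonal quasilattice `Q` and the cutting direction `Y₀ = (1,0)`, the group
`Q¹ = {l ∈ ℝ : lY₀ ∈ Q}` equals `ℤ + φℤ`. -/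
theorem penrose_kite_Q1 (φ : ℝ) (hφ : φ = (1 + Real.sqrt 5) / 2)
    (Y0 Y1 Y2 Y3 Y4 : ℝ × ℝ)
    (hY0 : Y0 = (1, 0))
    (hY1 : Y1 = (1 / (2 * φ), Real.sqrt (2 + φ) / 2))
    (hY2 : Y2 = (-(φ / 2), Real.sqrt (2 + φ) / (2 * φ)))
    (hY3 : Y3 = (-(φ / 2), -(Real.sqrt (2 + φ) / (2 * φ))))
    (hY4 : Y4 = (1 / (2 * φ), -(Real.sqrt (2 + φ) / 2)))
    (Q : AddSubgroup (ℝ × ℝ))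
    (hQ : Q = AddSubgroup.closure {Y0, Y1, Y2, Y3, Y4}) :
    {l : ℝ | (l, (0 : ℝ)) ∈ Q} = {x : ℝ | ∃ a b : ℤ, x = (a : ℝ) + (b : ℝ) * φ} := by
  have hgold : φ ^ 2 = φ + 1 := hφ ▸ Real.goldenRatio_sq
  have hs : Real.sqrt (2 + φ) / 2 ≠ 0 := by
    have : 0 < φ := hφ ▸ Real.goldenRatio_pos
    positivity
  have hY23 : ((φ, 0) : ℝ × ℝ) = -(Y2 + Y3) := by
    subst hY2 hY3
    ext <;> simp
  have hQ1 : Q.comap (AddMonoidHom.inl ℝ ℝ) = AddSubgroup.closure {1, φ} := by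
    subst hQ
    refine le_antisymm
      (fun l hl ↦ PenroseKite.mem_of_mk_zero_mem_map_shear (α := φ ^ 2 / 2) hs ?_) ?_
    · subst hY0 hY1 hY2 hY3 hY4
      exact PenroseKite.closure_pentagon_le_map_shear hgold (Real.sqrt (2 + φ)) hl
    · refine (AddSubgroup.closure_le _).2 (Set.insert_subset_iff.2 ⟨?_, ?_⟩)
      · exact AddSubgroup.subset_closure (by simp [hY0])
      · rw [Set.singleton_subset_iff, SetLike.mem_coe, AddSubgroup.mem_comap,
          AddMonoidHom.inl_apply, hY23]
        exact neg_mem (add_mem (AddSubgroup.subset_closure (by simp))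
          (AddSubgroup.subset_closure (by simp)))
  rw [← PenroseKite.coe_closure_one_pair, ← hQ1]
  rfl
end
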